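/- For any integers $d \geq 1$ and $h \geq 1$, there exists a $2^{-h}$-bracketing cover $\Delta$ of $[0,1)^d$ with $|\Delta| \leq \frac{1}{2}(2e)^d(2^{h+2}+1)^d$ such that for every $(v,w) \in \Delta$ and every coordinate $i \in \{1,\ldots,d\}$ one has $v_i = 2^{-(h+1+\lceil\log_2 d\rceil)} a_i$ and $w_i = 2^{-(h+2+\lceil\log_2 d\rceil)} b_i$ for some integers $a_i \in \{0,\ldots,2^{h+1+\lceil\log_2 d\rceil}\}$ and $b_i \in \{0,\ldots,2^{h+2+\lceil\log_2 d\rceil}\}$. -/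

import Mathlib

/-!
Brackets are built one coordinate at a time. If `W` is the product of the upper corners chosen so
far, the next coordinate is cut into the dyadic cells of width `2^{-e}`, with `e` least such that
`d 2^h W ≤ 2^e`. Over the coordinates not yet fixed, `W (∏ w - ∏ v)` exceeds the same quantity
for the next state by at most `W 2^{-e} ≤ 1 / (d 2^h)`, so a full bracket, started from `W = 1`,
has defect `∏ w - ∏ v ≤ d / (d 2^h) = 2^{-h}`.

For the count, put `c = d 2^{h+1}` and `C(s, m) = s (s - 1) ⋯ (s - m + 1) / m!`, i.e.
`(descPochhammer ℝ m).eval s / m!`. The states reached from `W` are `W_b = W (b + 1) / 2^e`, and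
by minimality of `e` the values `c W_b` are at least `1` apart. Pascal's rule and monotonicity of
`C(·, m)` therefore give `∑_b C(c W_b + m, m) ≤ C(c W + m + 1, m + 1)`, so there are at most
`C(c + d, d) ≤ (c + d)^d / d!` brackets, and `d^d ≤ d! e^d` finishes.
-/

open MeasureTheory Set

/-- The anchored box `[0, v) = ∏ i, [0, v i)` in `ℝ^d`. -/
def anchoredBox {d : ℕ} (v : Fin d → ℝ) : Set (Fin d → ℝ) :=
  Set.pi Set.univ fun i => Set.Ico 0 (v i)

theorem volume_anchoredBox {d : ℕ} {v : Fin d → ℝ} (hv : 0 ≤ v) :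
    volume (anchoredBox v) = ENNReal.ofReal (∏ i, v i) := by
  rw [anchoredBox, volume_pi_pi, ENNReal.ofReal_prod_of_nonneg fun i _ => hv i]
  simp only [Real.volume_Ico, sub_zero]

theorem volume_anchoredBox_diff {d : ℕ} {v w : Fin d → ℝ} (hv : 0 ≤ v) (hvw : v ≤ w) :
    volume (anchoredBox w \ anchoredBox v) = ENNReal.ofReal (∏ i, w i - ∏ i, v i) := by
  have hsub : anchoredBox v ⊆ anchoredBox w :=
    Set.pi_mono fun i _ => Ico_subset_Ico_right (hvw i)
  have hmeas : MeasurableSet (anchoredBox v) := MeasurableSet.univ_pi fun _ => measurableSet_Ico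
  rw [measure_sdiff hsub hmeas.nullMeasurableSet (by simp [volume_anchoredBox hv]),
    volume_anchoredBox hv, volume_anchoredBox (hv.trans hvw),
    ENNReal.ofReal_sub _ (Finset.prod_nonneg fun i _ => hv i)]

open Polynomial

theorem descPochhammer_eval_add_one {R : Type*} [CommRing R] (n : ℕ) (s : R) :
    (descPochhammer R (n + 1)).eval (s + 1) =
      (descPochhammer R (n + 1)).eval s + (n + 1) * (descPochhammer R n).eval s := by
  nth_rw 1 [descPochhammer_succ_left]
  rw [descPochhammer_succ_eval n s]
  simp only [eval_mul, eval_X, eval_comp, eval_sub, eval_one, add_sub_cancel_right]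
  ring

theorem descPochhammer_eval_le_pow {n : ℕ} {s : ℝ} (hs : n - 1 ≤ s) :
    (descPochhammer ℝ n).eval s ≤ s ^ n := by
  rw [descPochhammer_eval_eq_prod_range]
  calc ∏ j ∈ Finset.range n, (s - j) ≤ ∏ _j ∈ Finset.range n, s := by
        refine Finset.prod_le_prod (fun j hj => ?_) fun j _ => ?_
        · have : (j : ℝ) + 1 ≤ n := by exact_mod_cast Finset.mem_range.1 hj
          linarith
        · linarith [(Nat.cast_nonneg j : (0 : ℝ) ≤ j)]
    _ = s ^ n := by simp

theorem succ_mul_descPochhammer_eval_le {m : ℕ} {s : ℝ} (hs : m ≤ s) :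
    (m + 1) * (descPochhammer ℝ m).eval s ≤ (descPochhammer ℝ (m + 1)).eval (s + 1) := by
  rw [descPochhammer_eval_add_one]
  have := descPochhammer_nonneg (S := ℝ) (n := m + 1) (s := s) (by push_cast; linarith)
  linarith

theorem succ_mul_sum_descPochhammer_eval_le {t : ℝ} (ht : 1 ≤ t) (m N : ℕ) :
    (m + 1) * ∑ j ∈ Finset.range N, (descPochhammer ℝ m).eval (t * (j + 1) + m) ≤
      (descPochhammer ℝ (m + 1)).eval (t * N + m + 1) := by
  induction N with
  | zero => simpa using descPochhammer_nonneg (S := ℝ) (n := m + 1) (by push_cast; linarith)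
  | succ N ih =>
    have htN : 0 ≤ t * N := mul_nonneg (by linarith) N.cast_nonneg
    have hmono : (descPochhammer ℝ (m + 1)).eval (t * N + m + 1) ≤
        (descPochhammer ℝ (m + 1)).eval (t * (N + 1) + m) :=
      monotoneOn_descPochhammer_eval (m + 1) (by simp; linarith) (by simp; linarith)
        (by linarith)
    rw [Finset.sum_range_succ, mul_add, Nat.cast_succ, descPochhammer_eval_add_one]
    linarith

theorem succ_mul_sum_descPochhammer_eval_dyadic_le {x : ℝ} (hx : 0 ≤ x) {e : ℕ}
    (he : e = 0 ∨ 2 ^ e ≤ x) (m : ℕ) :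
    (m + 1) * ∑ b ∈ Finset.range (2 ^ e), (descPochhammer ℝ m).eval (x * ((b + 1) / 2 ^ e) + m) ≤
      (descPochhammer ℝ (m + 1)).eval (x + m + 1) := by
  rcases he with rfl | he
  · simpa using succ_mul_descPochhammer_eval_le (m := m) (s := x + m) (by linarith)
  · have ht : 1 ≤ x / 2 ^ e := by rwa [le_div_iff₀ (by positivity), one_mul]
    convert succ_mul_sum_descPochhammer_eval_le ht m (2 ^ e) using 4
    · ring
    · push_cast
      field_simp

theorem mul_pow_le_half_mul_two_mul_pow {a b : ℝ} (ha : 0 ≤ a) (hb : 0 ≤ b) {d : ℕ}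
    (hd : 1 ≤ d) : (a * b) ^ d ≤ 1 / 2 * (2 * a) ^ d * b ^ d := by
  obtain ⟨k, rfl⟩ := Nat.exists_eq_add_of_le' hd
  calc (a * b) ^ (k + 1) ≤ 2 ^ k * (a * b) ^ (k + 1) :=
        le_mul_of_one_le_left (by positivity) (one_le_pow₀ one_le_two)
    _ = _ := by rw [mul_pow, mul_pow]; ring

open Nat in
theorem le_exp_mul_pow_of_mul_factorial_le {N x : ℝ} (hx : 0 ≤ x) {d : ℕ}
    (hN : N * d ! ≤ (descPochhammer ℝ d).eval (d * x + d)) :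
    N ≤ (Real.exp 1 * (x + 1)) ^ d := by
  have hpow : (d : ℝ) ^ d ≤ d ! * Real.exp 1 ^ d := by
    have := Real.pow_div_factorial_le_exp _ (Nat.cast_nonneg d) d
    rwa [div_le_iff₀ (by positivity), ← Real.exp_one_pow, mul_comm] at this
  refine le_of_mul_le_mul_right ?_ (by positivity : (0 : ℝ) < d !)
  calc N * d ! ≤ (d * x + d) ^ d :=
        hN.trans (descPochhammer_eval_le_pow (by nlinarith [(Nat.cast_nonneg d : (0 : ℝ) ≤ d)]))
    _ = (d : ℝ) ^ d * (x + 1) ^ d := by rw [← mul_pow, mul_add_one (d : ℝ)]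
    _ ≤ d ! * Real.exp 1 ^ d * (x + 1) ^ d := by gcongr
    _ = (Real.exp 1 * (x + 1)) ^ d * d ! := by rw [mul_pow]; ring

noncomputable def dyadicResolution (y : ℝ) : ℕ := Nat.clog 2 ⌈y⌉₊

theorem le_two_pow_dyadicResolution (y : ℝ) : y ≤ 2 ^ dyadicResolution y :=
  calc y ≤ ⌈y⌉₊ := Nat.le_ceil y
    _ ≤ ((2 ^ dyadicResolution y : ℕ) : ℝ) := by exact_mod_cast Nat.le_pow_clog one_lt_two _
    _ = 2 ^ dyadicResolution y := by push_cast; rfl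

theorem dyadicResolution_le {y : ℝ} {n : ℕ} (hy : y ≤ 2 ^ n) : dyadicResolution y ≤ n :=
  Nat.clog_le_of_le_pow (Nat.ceil_le.2 (by exact_mod_cast hy))

theorem dyadicResolution_eq_zero_or_two_pow_le (y : ℝ) :
    dyadicResolution y = 0 ∨ 2 ^ dyadicResolution y ≤ 2 * y := by
  refine (eq_or_ne _ 0).imp_right fun hy => ?_
  have hlt : ((2 ^ (dyadicResolution y - 1) : ℕ) : ℝ) < y :=
    Nat.lt_ceil.1 (Nat.pow_lt_of_lt_clog (Nat.sub_one_lt hy))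
  rw [← Nat.sub_one_add_one hy, pow_succ]
  push_cast at hlt
  linarith

theorem div_two_pow_dyadicResolution_mul_le {a : ℝ} (ha : 0 < a) (W : ℝ) :
    W / 2 ^ dyadicResolution (a * W) ≤ 1 / a := by
  rw [div_le_div_iff₀ (by positivity) ha, one_mul, mul_comm]
  exact le_two_pow_dyadicResolution _

theorem dyadicResolution_mul_le {a W : ℝ} {n : ℕ} (ha : 0 ≤ a) (hW : W ∈ Icc 0 1)
    (han : a ≤ 2 ^ n) : dyadicResolution (a * W) ≤ n :=
  dyadicResolution_le ((mul_le_of_le_one_right ha hW.2).trans han)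

theorem exists_dyadic_bracket {a : ℝ} (ha : a ∈ Ico 0 1) (e : ℕ) :
    ∃ b : ℕ, b < 2 ^ e ∧ (b : ℝ) / 2 ^ e ≤ a ∧ a ≤ (b + 1) / 2 ^ e := by
  have he : (0 : ℝ) < 2 ^ e := by positivity
  have ha0 : 0 ≤ a * 2 ^ e := mul_nonneg ha.1 he.le
  refine ⟨⌊a * 2 ^ e⌋₊, ?_, ?_, ?_⟩
  · rw [Nat.floor_lt ha0]
    push_cast
    nlinarith [ha.2]
  · rw [div_le_iff₀ he]
    exact Nat.floor_le ha0
  · rw [le_div_iff₀ he]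
    exact (Nat.lt_floor_add_one _).le

theorem succ_div_two_pow_le_one {b e : ℕ} (hb : b < 2 ^ e) : ((b : ℝ) + 1) / 2 ^ e ≤ 1 := by
  rw [div_le_one (by positivity)]
  exact_mod_cast hb

theorem mul_succ_div_two_pow_mem_Icc {W : ℝ} (hW : W ∈ Icc 0 1) {b e : ℕ} (hb : b < 2 ^ e) :
    W * (((b : ℝ) + 1) / 2 ^ e) ∈ Icc 0 1 :=
  ⟨mul_nonneg hW.1 (by positivity), mul_le_one₀ hW.2 (by positivity) (succ_div_two_pow_le_one hb)⟩

theorem exists_nat_div_two_pow_eq {e E a : ℕ} (he : e ≤ E) (ha : a ≤ 2 ^ e) :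
    ∃ a' : ℕ, a' ≤ 2 ^ E ∧ (a : ℝ) / 2 ^ e = a' / 2 ^ E := by
  have hE : 2 ^ E = 2 ^ e * 2 ^ (E - e) := by rw [← pow_add, Nat.add_sub_cancel' he]
  refine ⟨a * 2 ^ (E - e), hE ▸ Nat.mul_le_mul_right _ ha, ?_⟩
  push_cast
  rw [div_eq_div_iff (by positivity) (by positivity), mul_assoc, ← pow_add, Nat.sub_add_cancel he]

/-- All brackets `(v, w)` with `(v j, w j) = (b / 2^e, (b + 1) / 2^e)` for some `b < 2^e`, where
`e = r (W * ∏_{k < j} w k)`. -/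
noncomputable def adaptiveBrackets (r : ℝ → ℕ) :
    (m : ℕ) → ℝ → Finset ((Fin m → ℝ) × (Fin m → ℝ))
  | 0, _ => {(0, 0)}
  | m + 1, W => (Finset.range (2 ^ r W)).biUnion fun b =>
      (adaptiveBrackets r m (W * ((b + 1) / 2 ^ r W))).image fun q =>
        (Fin.cons (b / 2 ^ r W) q.1, Fin.cons ((b + 1) / 2 ^ r W) q.2)

section adaptiveBrackets

variable {r : ℝ → ℕ}

theorem mem_adaptiveBrackets_succ {m : ℕ} {W : ℝ} {p : (Fin (m + 1) → ℝ) × (Fin (m + 1) → ℝ)} :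
    p ∈ adaptiveBrackets r (m + 1) W ↔ ∃ b : ℕ, b < 2 ^ r W ∧
      ∃ q ∈ adaptiveBrackets r m (W * (((b : ℝ) + 1) / 2 ^ r W)),
        p = (Fin.cons ((b : ℝ) / 2 ^ r W) q.1, Fin.cons (((b : ℝ) + 1) / 2 ^ r W) q.2) := by
  simp only [adaptiveBrackets, Finset.mem_biUnion, Finset.mem_range, Finset.mem_image, eq_comm]

theorem exists_mem_adaptiveBrackets_le_le {m : ℕ} (W : ℝ) {x : Fin m → ℝ}
    (hx : ∀ i, x i ∈ Ico 0 1) : ∃ p ∈ adaptiveBrackets r m W, p.1 ≤ x ∧ x ≤ p.2 := by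
  induction m generalizing W with
  | zero => exact ⟨(0, 0), Finset.mem_singleton_self _, fun i => i.elim0, fun i => i.elim0⟩
  | succ m ih =>
    obtain ⟨b, hb, hbx, hxb⟩ := exists_dyadic_bracket (hx 0) (r W)
    obtain ⟨q, hq, hqx, hxq⟩ := ih (W * ((b + 1) / 2 ^ r W)) (x := Fin.tail x) fun i => hx _
    exact ⟨_, mem_adaptiveBrackets_succ.2 ⟨b, hb, q, hq, rfl⟩,
      (Fin.cons_le (α := fun _ => ℝ)).2 ⟨hbx, hqx⟩, (Fin.le_cons (α := fun _ => ℝ)).2 ⟨hxb, hxq⟩⟩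

theorem exists_dyadic_coord_of_mem_adaptiveBrackets {m : ℕ} {W : ℝ} (hW : W ∈ Icc 0 1)
    {p : (Fin m → ℝ) × (Fin m → ℝ)} (hp : p ∈ adaptiveBrackets r m W) (i : Fin m) :
    ∃ V ∈ Icc (0 : ℝ) 1, ∃ b : ℕ, b < 2 ^ r V ∧
      p.1 i = b / 2 ^ r V ∧ p.2 i = (b + 1) / 2 ^ r V := by
  induction m generalizing W with
  | zero => exact i.elim0
  | succ m ih =>
    obtain ⟨b, hb, q, hq, rfl⟩ := mem_adaptiveBrackets_succ.1 hp
    cases i using Fin.cases with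
    | zero => exact ⟨W, hW, b, hb, rfl, rfl⟩
    | succ i => exact ih (mul_succ_div_two_pow_mem_Icc hW hb) hq i

theorem bounds_of_mem_adaptiveBrackets {m : ℕ} {W : ℝ} (hW : W ∈ Icc 0 1)
    {p : (Fin m → ℝ) × (Fin m → ℝ)} (hp : p ∈ adaptiveBrackets r m W) :
    0 ≤ p.1 ∧ p.1 ≤ p.2 ∧ p.2 ≤ 1 := by
  refine ⟨fun i => ?_, fun i => ?_, fun i => ?_⟩ <;>
  obtain ⟨V, -, b, hb, h1, h2⟩ := exists_dyadic_coord_of_mem_adaptiveBrackets hW hp i <;>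
  simp only [Pi.zero_apply, Pi.one_apply, h1, h2]
  · positivity
  · gcongr; linarith
  · exact succ_div_two_pow_le_one hb

theorem volume_defect_le_of_mem_adaptiveBrackets {δ : ℝ}
    (hr : ∀ W ∈ Icc (0 : ℝ) 1, W / 2 ^ r W ≤ δ) {m : ℕ} {W : ℝ} (hW : W ∈ Icc 0 1)
    {p : (Fin m → ℝ) × (Fin m → ℝ)} (hp : p ∈ adaptiveBrackets r m W) :
    W * (∏ i, p.2 i - ∏ i, p.1 i) ≤ m * δ := by
  induction m generalizing W with
  | zero => simp
  | succ m ih =>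
    obtain ⟨b, hb, q, hq, rfl⟩ := mem_adaptiveBrackets_succ.1 hp
    have hW' := mul_succ_div_two_pow_mem_Icc hW hb
    obtain ⟨hq0, hq12, hq2⟩ := bounds_of_mem_adaptiveBrackets hW' hq
    have hq1 : ∏ i, q.1 i ≤ 1 :=
      Finset.prod_le_one (fun i _ => hq0 i) fun i _ => (hq12 i).trans (hq2 i)
    have hmesh : W / 2 ^ r W * ∏ i, q.1 i ≤ δ :=
      (mul_le_of_le_one_right (div_nonneg hW.1 (by positivity)) hq1).trans (hr W hW)
    have hsplit : W * (∏ i, (Fin.cons (((b : ℝ) + 1) / 2 ^ r W) q.2 : Fin (m + 1) → ℝ) i -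
        ∏ i, (Fin.cons ((b : ℝ) / 2 ^ r W) q.1 : Fin (m + 1) → ℝ) i) =
        W * (((b : ℝ) + 1) / 2 ^ r W) * (∏ i, q.2 i - ∏ i, q.1 i) + W / 2 ^ r W * ∏ i, q.1 i := by
      simp only [Fin.prod_cons]
      ring
    rw [hsplit, Nat.cast_succ, add_mul, one_mul]
    exact add_le_add (ih hW' hq) hmesh

theorem volume_diff_le_of_mem_adaptiveBrackets {δ : ℝ}
    (hr : ∀ W ∈ Icc (0 : ℝ) 1, W / 2 ^ r W ≤ δ) {m : ℕ} {p : (Fin m → ℝ) × (Fin m → ℝ)}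
    (hp : p ∈ adaptiveBrackets r m 1) :
    volume (anchoredBox p.2 \ anchoredBox p.1) ≤ ENNReal.ofReal (m * δ) := by
  have hunit : (1 : ℝ) ∈ Icc 0 1 := right_mem_Icc.2 zero_le_one
  obtain ⟨hp0, hp12, -⟩ := bounds_of_mem_adaptiveBrackets hunit hp
  rw [volume_anchoredBox_diff hp0 hp12]
  exact ENNReal.ofReal_le_ofReal
    (by simpa using volume_defect_le_of_mem_adaptiveBrackets hr hunit hp)

open Nat in
theorem card_adaptiveBrackets_mul_factorial_le {c : ℝ} (hc : 0 ≤ c)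
    (hr : ∀ W ∈ Icc (0 : ℝ) 1, r W = 0 ∨ 2 ^ r W ≤ c * W) {m : ℕ} {W : ℝ} (hW : W ∈ Icc 0 1) :
    ((adaptiveBrackets r m W).card : ℝ) * m ! ≤ (descPochhammer ℝ m).eval (c * W + m) := by
  induction m generalizing W with
  | zero => simp [adaptiveBrackets]
  | succ m ih =>
    have hcard : (adaptiveBrackets r (m + 1) W).card ≤ ∑ b ∈ Finset.range (2 ^ r W),
        (adaptiveBrackets r m (W * ((b + 1) / 2 ^ r W))).card :=
      Finset.card_biUnion_le.trans (Finset.sum_le_sum fun _ _ => Finset.card_image_le)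
    calc ((adaptiveBrackets r (m + 1) W).card : ℝ) * (m + 1)!
      _ ≤ (m + 1) * ∑ b ∈ Finset.range (2 ^ r W),
          ((adaptiveBrackets r m (W * ((b + 1) / 2 ^ r W))).card : ℝ) * m ! := by
        rw [← Finset.sum_mul, factorial_succ, cast_mul, cast_succ, mul_left_comm]
        gcongr
        exact_mod_cast hcard
      _ ≤ (m + 1) * ∑ b ∈ Finset.range (2 ^ r W),
          (descPochhammer ℝ m).eval (c * W * ((b + 1) / 2 ^ r W) + m) := by
        gcongr with b hb
        rw [mul_assoc]
        exact ih (mul_succ_div_two_pow_mem_Icc hW (Finset.mem_range.1 hb))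
      _ ≤ _ := by
        rw [cast_succ, ← add_assoc]
        exact succ_mul_sum_descPochhammer_eval_dyadic_le (mul_nonneg hc hW.1) (hr W hW) m

end adaptiveBrackets

theorem dyadic_bracketing_cover_general (d h : ℕ) (hd : 1 ≤ d) :
    ∃ Δ : Finset ((Fin d → ℝ) × (Fin d → ℝ)),
      (∀ x ∈ Set.pi Set.univ fun _ : Fin d => Set.Ico (0:ℝ) 1,
        ∃ p ∈ Δ, p.1 ≤ x ∧ x ≤ p.2 ∧
          volume (anchoredBox p.2 \ anchoredBox p.1) ≤ ENNReal.ofReal ((2:ℝ)^(-(h:ℤ)))) ∧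
      (Δ.card : ℝ) ≤ (1/2) * (2 * Real.exp 1)^d * ((2:ℝ)^(h+2) + 1)^d ∧
      (∀ p ∈ Δ, ∀ i : Fin d,
        (∃ a : ℕ, a ≤ 2^(h + 1 + Nat.clog 2 d) ∧
          p.1 i = (a : ℝ) / 2^(h + 1 + Nat.clog 2 d)) ∧
        (∃ b : ℕ, b ≤ 2^(h + 2 + Nat.clog 2 d) ∧
          p.2 i = (b : ℝ) / 2^(h + 2 + Nat.clog 2 d))) := by
  set r : ℝ → ℕ := fun W => dyadicResolution (d * 2 ^ h * W)
  have hd0 : (0 : ℝ) < d := by exact_mod_cast hd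
  have hunit : (1 : ℝ) ∈ Icc 0 1 := right_mem_Icc.2 zero_le_one
  refine ⟨adaptiveBrackets r d 1, fun x hx => ?_, ?_, fun p hp i => ?_⟩
  · obtain ⟨p, hp, hpx, hxp⟩ := exists_mem_adaptiveBrackets_le_le (r := r) 1 fun i => hx i trivial
    refine ⟨p, hp, hpx, hxp, (volume_diff_le_of_mem_adaptiveBrackets
      (fun W _ => div_two_pow_dyadicResolution_mul_le (by positivity) W) hp).trans_eq ?_⟩
    rw [zpow_neg, zpow_natCast]
    field_simp
  · have hcard := card_adaptiveBrackets_mul_factorial_le (r := r) (m := d) (c := d * 2 ^ (h + 1))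
      (by positivity) (fun W _ => (dyadicResolution_eq_zero_or_two_pow_le _).imp_right
        (·.trans_eq (by ring))) hunit
    rw [mul_one] at hcard
    calc _ ≤ (Real.exp 1 * (2 ^ (h + 1) + 1)) ^ d :=
          le_exp_mul_pow_of_mul_factorial_le (by positivity) hcard
      _ ≤ (Real.exp 1 * (2 ^ (h + 2) + 1)) ^ d := by gcongr <;> norm_num
      _ ≤ _ := mul_pow_le_half_mul_two_mul_pow (by positivity) (by positivity) hd
  · obtain ⟨V, hV, b, hb, h1, h2⟩ := exists_dyadic_coord_of_mem_adaptiveBrackets hunit hp i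
    have he : r V ≤ h + Nat.clog 2 d := dyadicResolution_mul_le (by positivity) hV <| by
      rw [pow_add, mul_comm]
      gcongr
      exact_mod_cast Nat.le_pow_clog one_lt_two d
    rw [h1, h2]
    exact ⟨exists_nat_div_two_pow_eq (by omega) hb.le,
      by exact_mod_cast exists_nat_div_two_pow_eq (a := b + 1) (by omega) hb⟩

/-- For integers `d ≥ 1`, `h ≥ 1` there exists a `2^{-h}`-bracketing cover of `[0,1)^d`
of cardinality at most `(1/2)(2e)^d(2^{h+2}+1)^d` all of whose brackets have dyadic
coordinates of the indicated resolutions. -/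
theorem dyadic_bracketing_cover (d h : ℕ) (hd : 1 ≤ d) (hh : 1 ≤ h) :
    ∃ Δ : Finset ((Fin d → ℝ) × (Fin d → ℝ)),
      (∀ x ∈ Set.pi Set.univ fun _ : Fin d => Set.Ico (0:ℝ) 1,
        ∃ p ∈ Δ, p.1 ≤ x ∧ x ≤ p.2 ∧
          volume (anchoredBox p.2 \ anchoredBox p.1) ≤ ENNReal.ofReal ((2:ℝ)^(-(h:ℤ)))) ∧
      (Δ.card : ℝ) ≤ (1/2) * (2 * Real.exp 1)^d * ((2:ℝ)^(h+2) + 1)^d ∧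
      (∀ p ∈ Δ, ∀ i : Fin d,
        (∃ a : ℕ, a ≤ 2^(h + 1 + Nat.clog 2 d) ∧
          p.1 i = (a : ℝ) / 2^(h + 1 + Nat.clog 2 d)) ∧
        (∃ b : ℕ, b ≤ 2^(h + 2 + Nat.clog 2 d) ∧
          p.2 i = (b : ℝ) / 2^(h + 2 + Nat.clog 2 d))) :=
  dyadic_bracketing_cover_general d h hd
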